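/- The function G(r,z) = z(z - 2)²(z + 2)²(1 - r²)² is a first integral of the system dr/dt = (1 - r²)²(1 - 0.25 z²)(1 - 1.25 z²), dz/dt = 4 r z (1 - r²)(1 - 0.25 z²)²; that is, along any solution, d/dt [G(r(t), z(t))] = 0. -/

import Mathlib

noncomputable def Dr12 (r z : ℝ) : ℝ := (1 - r ^ 2) ^ 2 * (1 - 0.25 * z ^ 2) * (1 - 1.25 * z ^ 2)

noncomputable def Dz12 (r z : ℝ) : ℝ := 4 * r * z * (1 - r ^ 2) * (1 - 0.25 * z ^ 2) ^ 2

/-- First integral of the secondary-drag dynamics in a 1×2 cross-section. -/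
noncomputable def G12 (r z : ℝ) : ℝ := z * (z - 2) ^ 2 * (z + 2) ^ 2 * (1 - r ^ 2) ^ 2

/-- G is a first integral: along any solution of the 1×2 drag ODE system,
d/dt G(r(t),z(t)) = 0. -/
theorem G12_first_integral (r z : ℝ → ℝ)
    (hr : ∀ t, HasDerivAt r (Dr12 (r t) (z t)) t)
    (hz : ∀ t, HasDerivAt z (Dz12 (r t) (z t)) t) :
    ∀ t, HasDerivAt (fun t => G12 (r t) (z t)) 0 t := by
  intro t
  have hR := hr t
  have hZ := hz t
  have h := ((hZ.mul ((hZ.sub_const 2).pow 2)).mul ((hZ.add_const 2).pow 2)).mul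
    (((hasDerivAt_const t (1 : ℝ)).sub (hR.pow 2)).pow 2)
  have e : (fun t => G12 (r t) (z t)) =
      fun t => z t * (z t - 2) ^ 2 * (z t + 2) ^ 2 * (1 - r t ^ 2) ^ 2 := by
    funext t; simp [G12]
  rw [e]
  convert h using 1
  · rfl
  · rfl
  · funext x; simp only [Pi.mul_apply, Pi.pow_apply, Pi.sub_apply]
  simp only [Dr12, Dz12, Pi.mul_apply, Pi.pow_apply, Pi.sub_apply]
  ring
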